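/- arXiv:2308.06001 — 4 statements merged into one kernel-verified Lean document; each statement's English description precedes it below -/
import Mathlib

section
/- Let A be a real symmetric n×n matrix with I + A positive definite. Then tr(A) - log(det(I + A)) ≤ tr((I + A)⁻¹ A²), i.e. the 'perturbation entropy' integrand is bounded above by ‖(I+A)^{-1/2} A‖_F², where ‖·‖_F is the Frobenius norm. -/
open Matrix Finset

theorem entropy_upper {n : ℕ} (A : Matrix (Fin n) (Fin n) ℝ) (hA : A.IsSymm)
    (hpd : (1 + A).PosDef) :
    A.trace - Real.log (1 + A).det ≤ ((1 + A)⁻¹ * (A * A)).trace := by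
  classical
  set B : Matrix (Fin n) (Fin n) ℝ := 1 + A with hBdef
  have hB : B.IsHermitian := hpd.isHermitian
  set lam := hB.eigenvalues with hlam
  have hlampos : ∀ i, 0 < lam i := hpd.eigenvalues_pos
  set U : Matrix (Fin n) (Fin n) ℝ := (hB.eigenvectorUnitary : Matrix (Fin n) (Fin n) ℝ) with hU
  have hUU : star U * U = 1 := Unitary.coe_star_mul_self hB.eigenvectorUnitary
  have hspec : B = U * diagonal (RCLike.ofReal ∘ lam) * star U := hB.spectral_theorem
  have hdiag : (RCLike.ofReal ∘ lam : Fin n → ℝ) = lam := by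
    funext i; simp [RCLike.ofReal]
  rw [hdiag] at hspec
  have hBinv : B⁻¹ = U * diagonal (fun i => (lam i)⁻¹) * star U := by
    apply Matrix.inv_eq_right_inv
    rw [hspec]
    calc U * diagonal lam * star U * (U * diagonal (fun i => (lam i)⁻¹) * star U)
        = U * diagonal lam * (star U * U) * diagonal (fun i => (lam i)⁻¹) * star U := by
          noncomm_ring
      _ = 1 := by
          rw [hUU, Matrix.mul_one, Matrix.mul_assoc, Matrix.mul_assoc,
            ← Matrix.mul_assoc (diagonal lam), diagonal_mul_diagonal]
          have : (fun i => lam i * (lam i)⁻¹) = (fun _ => (1:ℝ)) := by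
            funext i; exact mul_inv_cancel₀ (hlampos i).ne'
          rw [this, diagonal_one, Matrix.one_mul,
            ← Unitary.coe_mul_star_self hB.eigenvectorUnitary]
          rfl
  have htrB : B.trace = ∑ i, lam i := by
    rw [hspec, Matrix.trace_mul_cycle, hUU, Matrix.one_mul, trace_diagonal]
  have htrBinv : B⁻¹.trace = ∑ i, (lam i)⁻¹ := by
    rw [hBinv, Matrix.trace_mul_cycle, hUU, Matrix.one_mul, trace_diagonal]
  have hdet : B.det = ∏ i, lam i := by
    have := hB.det_eq_prod_eigenvalues
    simpa using this
  have hlog : Real.log B.det = ∑ i, Real.log (lam i) := by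
    rw [hdet, Real.log_prod]
    exact fun i _ => (hlampos i).ne'
  have hAB : A = B - 1 := (add_sub_cancel_left 1 A).symm
  have htrA : A.trace = (∑ i, lam i) - n := by
    rw [hAB, trace_sub, htrB, trace_one]
    simp
  have hinvB : B⁻¹ * B = 1 :=
    Matrix.nonsing_inv_mul B (isUnit_iff_ne_zero.2 hpd.det_pos.ne')
  have hprod : B⁻¹ * (A * A) = B - 2 • (1 : Matrix (Fin n) (Fin n) ℝ) + B⁻¹ := by
    have hsq : (B - 1) * (B - 1) = B * B - 2 • B + 1 := by noncomm_ring
    rw [hAB, hsq, Matrix.mul_add, Matrix.mul_sub, Matrix.mul_smul, ← Matrix.mul_assoc, hinvB,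
      Matrix.one_mul, Matrix.mul_one]
  have htrprod : (B⁻¹ * (A * A)).trace = (∑ i, lam i) - 2 * n + ∑ i, (lam i)⁻¹ := by
    rw [hprod, trace_add, trace_sub, htrB, htrBinv, trace_smul, trace_one]
    simp only [Fintype.card_fin]; ring
  rw [htrA, hlog, htrprod]
  have key : ∀ i ∈ Finset.univ, (1 : ℝ) - (lam i)⁻¹ ≤ Real.log (lam i) := by
    intro i _
    have h := Real.log_le_sub_one_of_pos (x := (lam i)⁻¹) (inv_pos.mpr (hlampos i))
    rw [Real.log_inv] at h
    linarith
  have := Finset.sum_le_sum key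
  simp only [Finset.sum_sub_distrib, Finset.sum_const, card_univ, Fintype.card_fin,
    nsmul_eq_mul, mul_one] at this
  linarith
end

section
/- Let W ∈ (0,1) and α := (1 - W)(1 - W/√(1 + W²)). Let c̄ be the 3×3 matrix with rows (1 + 2W², W, 0), (W, 1, 0), (0, 0, 1). Then the smallest eigenvalue of I - α·c̄ equals W. -/
open Matrix

private lemma det_key (W α s μ : ℝ) (hs2 : s^2 = 1 + W^2)
    (hK : α * (1 + W^2 + W*s) = 1 - W) :
    det (algebraMap ℝ (Matrix (Fin 3) (Fin 3) ℝ) μ -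
        (1 - α • !![1 + 2*W^2, W, 0; W, 1, 0; 0, 0, 1])) =
      (μ - (1-α)) * (μ - W) * (μ - (1 - α*(1+W^2) + α*W*s)) := by
  rw [Matrix.det_fin_three]
  simp [Matrix.algebraMap_matrix_apply, Matrix.one_apply]
  linear_combination (μ - 1 + α) * (α^2*W^2*hs2 + (μ - 1 + α*(1+W^2) - α*W*s) * hK)

private lemma det_self_key (W α s : ℝ) (hs2 : s^2 = 1 + W^2)
    (hK : α * (1 + W^2 + W*s) = 1 - W) :
    det (1 - α • !![1 + 2*W^2, W, 0; W, 1, 0; (0:ℝ), 0, 1]) =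
      (1-α) * W * (1 - α*(1+W^2) + α*W*s) := by
  have h0 := det_key W α s 0 hs2 hK
  rw [map_zero, zero_sub, det_neg] at h0
  simp only [Fintype.card_fin] at h0
  linear_combination (-1 : ℝ) * h0

theorem min_eigenvalue (W : ℝ) (hW : W ∈ Set.Ioo (0:ℝ) 1)
    (α : ℝ) (hα : α = (1 - W) * (1 - W / Real.sqrt (1 + W^2)))
    (cbar : Matrix (Fin 3) (Fin 3) ℝ)
    (hc : cbar = !![1 + 2*W^2, W, 0; W, 1, 0; 0, 0, 1])
    (h : (1 - α • cbar).IsHermitian) :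
    ⨅ i, h.eigenvalues i = W := by
  obtain ⟨h0W, hW1⟩ := hW
  set s := Real.sqrt (1 + W^2) with hs
  have hs2 : s^2 = 1 + W^2 := Real.sq_sqrt (by positivity)
  have hs0 : 0 < s := Real.sqrt_pos.mpr (by positivity)
  have hWs : W < s := by nlinarith
  have hK : α * (1 + W^2 + W*s) = 1 - W := by
    rw [hα]; field_simp
    linear_combination W * hs2
  have hα0 : 0 < α := by
    rw [hα]
    have h1 : W / s < 1 := (div_lt_one hs0).mpr hWs
    have h2 : 0 < W / s := div_pos h0W hs0
    nlinarith
  have hα1 : α < 1 := by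
    rw [hα]
    have h2 : 0 < W / s := div_pos h0W hs0
    nlinarith
  set r3 : ℝ := 1 - α*(1+W^2) + α*W*s with hr3
  have hWr1 : W < 1 - α := by
    have e : 1 - α - W = α*(W^2 + W*s) := by linear_combination -hK
    nlinarith [mul_pos hα0 (by positivity : (0:ℝ) < W^2 + W*s)]
  have hr1r3 : 1 - α < r3 := by
    have : 0 < α * W * (s - W) := mul_pos (mul_pos hα0 h0W) (by linarith)
    rw [hr3]; nlinarith
  -- every real spectral value is one of the three roots
  have hspec : ∀ μ ∈ spectrum ℝ (1 - α • cbar), μ = 1 - α ∨ μ = W ∨ μ = r3 := by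
    intro μ hμ
    rw [spectrum.mem_iff] at hμ
    have hdet : det (algebraMap ℝ (Matrix (Fin 3) (Fin 3) ℝ) μ - (1 - α • cbar)) = 0 := by
      by_contra hne
      exact hμ ((Matrix.isUnit_iff_isUnit_det _).mpr (isUnit_iff_ne_zero.mpr hne))
    rw [hc, det_key W α s μ hs2 hK] at hdet
    rcases mul_eq_zero.mp hdet with h' | h'
    · rcases mul_eq_zero.mp h' with h'' | h''
      · exact Or.inl (by linarith [sub_eq_zero.mp h''])
      · exact Or.inr (Or.inl (by linarith [sub_eq_zero.mp h'']))
    · exact Or.inr (Or.inr (by rw [hr3]; linarith [sub_eq_zero.mp h']))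
  have hmem : ∀ i, h.eigenvalues i = 1 - α ∨ h.eigenvalues i = W ∨ h.eigenvalues i = r3 :=
    fun i => hspec _ (h.eigenvalues_mem_spectrum_real i)
  have hlow : ∀ i, W ≤ h.eigenvalues i := by
    intro i
    rcases hmem i with h' | h' | h' <;> rw [h'] <;> linarith
  -- existence of an eigenvalue equal to W, via the determinant
  have hdetprod : h.eigenvalues 0 * h.eigenvalues 1 * h.eigenvalues 2 =
      (1-α) * W * r3 := by
    have hd := h.det_eq_prod_eigenvalues
    rw [Fin.prod_univ_three] at hd
    simp only [RCLike.ofReal_real_eq_id, id] at hd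
    have hd2 : (1 - α • cbar).det = (1-α) * W * r3 := by
      rw [hc, hr3]; exact det_self_key W α s hs2 hK
    exact hd.symm.trans hd2
  have hsq : W * r3 < (1-α)^2 := by
    have hid : (1-α)^2 - W * r3 = α * W^2 * (2 - α) := by
      rw [hr3]
      linear_combination α^2*W^2*hs2 - (1 - α*(1+W^2) + α*W*s) * hK
    have hpos2 : 0 < α * W^2 * (2 - α) :=
      mul_pos (mul_pos hα0 (by positivity)) (by linarith)
    linarith
  have hpos : (0:ℝ) < 1 - α := by linarith
  have hex : ∃ i, h.eigenvalues i = W := by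
    by_contra hno
    push_neg at hno
    have key : ∀ i, 1 - α ≤ h.eigenvalues i := by
      intro i
      rcases hmem i with h' | h' | h'
      · exact h'.ge
      · exact absurd h' (hno i)
      · rw [h']; linarith
    have h0 := key 0; have h1 := key 1; have h2 := key 2
    have p01 : (1-α)*(1-α) ≤ h.eigenvalues 0 * h.eigenvalues 1 :=
      mul_le_mul h0 h1 hpos.le (hpos.le.trans h0)
    have p012 : (1-α)*(1-α)*(1-α) ≤ h.eigenvalues 0 * h.eigenvalues 1 * h.eigenvalues 2 :=
      mul_le_mul p01 h2 hpos.le (le_trans (mul_nonneg hpos.le hpos.le) p01)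
    nlinarith [mul_lt_mul_of_pos_left hsq hpos]
  obtain ⟨i0, hi0⟩ := hex
  apply le_antisymm
  · calc ⨅ i, h.eigenvalues i ≤ h.eigenvalues i0 :=
        ciInf_le (Set.Finite.bddBelow (Set.finite_range _)) i0
      _ = W := hi0
  · exact le_ciInf hlow
end

section
/- Let W ∈ (0,1) and α := (1 - W)(1 - W/√(1 + W²)). Then the 3×3 matrix I - α·c̄, where c̄ has entries c̄₁₁ = 1 + 2W², c̄₁₂ = c̄₂₁ = W, c̄₂₂ = c̄₃₃ = 1 and zeros elsewhere, is positive definite. -/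
set_option maxHeartbeats 1000000

open Matrix

theorem posdef_I_sub (W : ℝ) (hW : W ∈ Set.Ioo (0:ℝ) 1)
    (α : ℝ) (hα : α = (1 - W) * (1 - W / Real.sqrt (1 + W^2)))
    (cbar : Matrix (Fin 3) (Fin 3) ℝ)
    (hc : cbar = !![1 + 2*W^2, W, 0; W, 1, 0; 0, 0, 1]) :
    (1 - α • cbar).PosDef := by
  obtain ⟨hW0, hW1⟩ := hW
  set s := Real.sqrt (1 + W^2) with hs
  have hs2 : s^2 = 1 + W^2 := Real.sq_sqrt (by positivity)
  have hs_pos : 0 < s := Real.sqrt_pos.mpr (by positivity)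
  have hs1 : 1 ≤ s := by nlinarith [sq_nonneg (s-1)]
  have hsW : W < s := by nlinarith
  have hsne : s ≠ 0 := ne_of_gt hs_pos
  have hαs : α * s = (1 - W) * (s - W) := by
    rw [hα]; field_simp
  have h1 : (1 - α) * s = W * (1 + s - W) := by linear_combination -hαs
  have h2 : (1 - α * (1 + 2*W^2)) * s
      = W * ((1 - W) * (1 + 2*W^2) + s * (1 - 2*W + 2*W^2)) := by
    linear_combination (-(1 + 2*W^2)) * hαs
  have hbr2 : 0 < 1 + s - W := by nlinarith
  have hbr : 0 < (1 - W) * (1 + 2*W^2) + s * (1 - 2*W + 2*W^2) := by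
    nlinarith [sq_nonneg (1 - W)]
  have hb : 0 < 1 - α := by nlinarith [h1, mul_pos hW0 hbr2, hs_pos]
  have ha : 0 < 1 - α * (1 + 2*W^2) := by nlinarith [h2, mul_pos hW0 hbr, hs_pos]
  have key : 0 < ((1 - W) * (1 + 2*W^2) + s * (1 - 2*W + 2*W^2)) * (1 + s - W)
      - (1 - W)^2 * (s - W)^2 := by
    nlinarith [sq_nonneg (1 - W), sq_nonneg (s - W), mul_pos hW0 hs_pos,
      mul_pos hs_pos hs_pos, sq_nonneg (s - 1), mul_pos hW0 hW0,
      mul_nonneg (sq_nonneg (1 - W)) hW0.le, mul_nonneg (sq_nonneg (1 - W)) hs_pos.le]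
  have hdet : 0 < (1 - α * (1 + 2*W^2)) * (1 - α) - α^2 * W^2 := by
    have expand : ((1 - α * (1 + 2*W^2)) * (1 - α) - α^2 * W^2) * s^2
        = ((1 - α * (1 + 2*W^2)) * s) * ((1 - α) * s) - (α * s)^2 * W^2 := by ring
    rw [h1, h2, hαs] at expand
    have hD : 0 < ((1 - α * (1 + 2*W^2)) * (1 - α) - α^2 * W^2) * s^2 := by
      rw [expand]
      nlinarith [mul_pos (mul_pos hW0 hW0) key]
    nlinarith [hD, hs2, sq_nonneg W]
  rw [Matrix.posDef_iff_dotProduct_mulVec]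
  constructor
  · subst hc
    ext i j
    fin_cases i <;> fin_cases j <;>
      simp [Matrix.conjTranspose_apply, Matrix.sub_apply, Matrix.one_apply,
        Matrix.smul_apply]
  · intro x hx
    obtain ⟨i, hi⟩ := Function.ne_iff.mp hx
    have hi' : x i ≠ 0 := by simpa using hi
    have hq : star x ⬝ᵥ ((1 - α • cbar) *ᵥ x)
        = (1 - α * (1 + 2*W^2)) * (x 0)^2 - 2 * (α * W) * (x 0 * x 1)
          + (1 - α) * (x 1)^2 + (1 - α) * (x 2)^2 := by
      subst hc
      simp [dotProduct, Matrix.mulVec, Fin.sum_univ_three,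
        Matrix.sub_apply, Matrix.one_apply, Matrix.smul_apply]
      ring
    rw [hq]
    have hk := sq_nonneg ((1 - α * (1 + 2*W^2)) * x 0 - α * W * x 1)
    have q1 := sq_nonneg (x 1)
    have q2 := sq_nonneg (x 2)
    fin_cases i
    · have hp : 0 < (x 0)^2 := by positivity
      nlinarith [sq_nonneg ((1 - α) * x 1 - α * W * x 0), mul_pos hdet hp,
        mul_nonneg (mul_nonneg hb.le hb.le) q2, hb]
    · have hp : 0 < (x 1)^2 := by positivity
      nlinarith [hk, mul_pos hdet hp, mul_nonneg (mul_nonneg ha.le hb.le) q2, ha]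
    · have hp : 0 < (x 2)^2 := by positivity
      nlinarith [hk, mul_nonneg hdet.le q1, mul_pos (mul_pos ha hb) hp, ha]
end

section
/- Let W ∈ (0,1), α := (1 - W)(1 - W/√(1 + W²)), c̄ as in the Oldroyd-B Couette steady state, and let c be any symmetric positive semidefinite 3×3 matrix. Then the smallest eigenvalue of I - α·c̄ + α·c is at least W; in particular I + α·d ≻ 0 where d := c - c̄. -/
open Matrix

theorem min_eig_ge (W : ℝ) (hW : W ∈ Set.Ioo (0:ℝ) 1)
    (α : ℝ) (hα : α = (1 - W) * (1 - W / Real.sqrt (1 + W^2)))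
    (cbar : Matrix (Fin 3) (Fin 3) ℝ)
    (hcbar : cbar = !![1 + 2*W^2, W, 0; W, 1, 0; 0, 0, 1])
    (c : Matrix (Fin 3) (Fin 3) ℝ) (hc : c.PosSemidef)
    (h : (1 - α • cbar + α • c).IsHermitian) :
    W ≤ ⨅ i, h.eigenvalues i ∧ (1 + α • (c - cbar)).PosDef := by
  obtain ⟨hW0, hW1⟩ := hW
  set s := Real.sqrt (1 + W^2) with hs_def
  have hs : 0 < s := Real.sqrt_pos.2 (by nlinarith)
  have hs2 : s^2 = 1 + W^2 := Real.sq_sqrt (by nlinarith)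
  have hsW : W < s := by nlinarith
  have hαs : α * s = (1 - W) * (s - W) := by
    rw [hα]; field_simp
  have hα0 : 0 ≤ α := by
    have h1 : 0 < α * s := by rw [hαs]; nlinarith
    nlinarith
  -- The key positive semidefinite matrix
  have hP : ((1 - W) • (1 : Matrix (Fin 3) (Fin 3) ℝ) - α • cbar).PosSemidef := by
    subst hcbar
    rw [Matrix.posSemidef_iff_dotProduct_mulVec]
    constructor
    · ext i j
      fin_cases i <;> fin_cases j <;>
        simp [Matrix.conjTranspose_apply, Matrix.one_apply]
    · intro x
      have e : (star x) ⬝ᵥ (((1 - W) • (1 : Matrix (Fin 3) (Fin 3) ℝ)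
          - α • !![1 + 2*W^2, W, 0; W, 1, 0; 0, 0, 1]) *ᵥ x)
          = (1 - W - α*(1 + 2*W^2)) * (x 0)^2 - 2*α*W*(x 0)*(x 1)
            + (1 - W - α) * (x 1)^2 + (1 - W - α) * (x 2)^2 := by
        simp [dotProduct, Matrix.mulVec, Fin.sum_univ_three, Matrix.one_apply,
          Matrix.sub_apply, Matrix.smul_apply]
        ring
      rw [e]
      have key : s * ((1 - W - α*(1 + 2*W^2)) * (x 0)^2 - 2*α*W*(x 0)*(x 1)
            + (1 - W - α) * (x 1)^2 + (1 - W - α) * (x 2)^2)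
          = (1 - W) * W * (((s - W)*(x 0) - x 1)^2 + (x 2)^2) := by
        linear_combination (-((1+2*W^2)*(x 0)^2 + 2*W*(x 0)*(x 1) + (x 1)^2 + (x 2)^2)) * hαs
          + (-(1-W)*W*(x 0)^2) * hs2
      have hQ : 0 ≤ s * ((1 - W - α*(1 + 2*W^2)) * (x 0)^2 - 2*α*W*(x 0)*(x 1)
            + (1 - W - α) * (x 1)^2 + (1 - W - α) * (x 2)^2) := by
        rw [key]
        have : (0:ℝ) ≤ (1 - W) * W := by nlinarith
        nlinarith [sq_nonneg ((s - W)*(x 0) - x 1), sq_nonneg (x 2)]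
      exact nonneg_of_mul_nonneg_right hQ hs
  have hαc : (α • c).PosSemidef := by
    rw [Matrix.posSemidef_iff_dotProduct_mulVec]
    constructor
    · show _ = _
      rw [Matrix.conjTranspose_smul, hc.1.eq, star_trivial]
    · intro x
      rw [smul_mulVec, dotProduct_smul]
      exact mul_nonneg hα0 (hc.dotProduct_mulVec_nonneg x)
  have hN : ((1 : Matrix (Fin 3) (Fin 3) ℝ) - α • cbar + α • c - W • 1).PosSemidef := by
    have e : (1 : Matrix (Fin 3) (Fin 3) ℝ) - α • cbar + α • c - W • 1
        = ((1 - W) • (1 : Matrix (Fin 3) (Fin 3) ℝ) - α • cbar) + α • c := by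
      rw [sub_smul, one_smul]; abel
    rw [e]
    exact hP.add hαc
  constructor
  · refine le_ciInf fun i => ?_
    rw [h.eigenvalues_eq i]
    set v : Fin 3 → ℝ := ⇑(h.eigenvectorBasis i) with hv_def
    have hv : (star v) ⬝ᵥ v = (1:ℝ) := by
      have hinner : inner ℝ (h.eigenvectorBasis i) (h.eigenvectorBasis i) = (1:ℝ) := by
        rw [real_inner_self_eq_norm_sq, h.eigenvectorBasis.orthonormal.1 i]
        norm_num
      rw [EuclideanSpace.inner_eq_star_dotProduct] at hinner
      simpa [dotProduct,
        Fin.sum_univ_three] using hinner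
    have key := hN.dotProduct_mulVec_nonneg v
    have expand : (star v) ⬝ᵥ ((1 - α • cbar + α • c) *ᵥ v)
        = (star v) ⬝ᵥ (((1 : Matrix (Fin 3) (Fin 3) ℝ) - α • cbar + α • c - W • 1) *ᵥ v)
          + W := by
      rw [sub_mulVec, dotProduct_sub, smul_mulVec, one_mulVec, dotProduct_smul, hv]
      simp
    simp only [RCLike.re_to_real]
    rw [expand] at *
    linarith
  · have e : (1 : Matrix (Fin 3) (Fin 3) ℝ) + α • (c - cbar)
      = ((1 : Matrix (Fin 3) (Fin 3) ℝ) - α • cbar + α • c - W • 1) + W • 1 := by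
      rw [smul_sub]; abel
    rw [e]
    refine Matrix.PosDef.posSemidef_add hN ?_
    rw [Matrix.posDef_iff_dotProduct_mulVec]
    constructor
    · show _ = _
      rw [Matrix.conjTranspose_smul, Matrix.isHermitian_one.eq, star_trivial]
    · intro x hx
      rw [smul_mulVec, one_mulVec, dotProduct_smul]
      have : (0:ℝ) < (star x) ⬝ᵥ x := by
        have h0 : (star x) ⬝ᵥ x = ∑ j, (x j)^2 := by
          simp [dotProduct, pow_two]
        rw [h0]
        rcases Function.ne_iff.mp hx with ⟨j, hj⟩
        exact Finset.sum_pos' (fun k _ => sq_nonneg _) ⟨j, Finset.mem_univ j, by nlinarith [abs_pos.mpr hj, sq_abs (x j)]⟩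
      exact mul_pos hW0 this
end
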